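/- arXiv:1007.2673 — 9 statements merged into one kernel-verified Lean document; each statement's English description precedes it below -/
import Mathlib

section
/- Let V have decidable equality. Let f : Fin k → Finset (Multiset V) give k nonempty clauses of terms (each term a multiset over V), and let G : Fin m → Finset V give m nonempty clauses of single variables. The product polynomial (∏_i f i) · (∏_j G j) has a multilinear monomial in its sum-product expansion — i.e., there exist h : Fin k → Multiset V with h i ∈ f i for all i and g : Fin m → V with g j ∈ G j for all j such that the multiset (∑_i h i) + (∑_j {g j}) has every multiplicity at most 1 — if and only if there exists h : Fin k → Multiset V with h i ∈ f i for all i such that ψ := ∑_i h i has every multiplicity at most 1, every purged clause G j \ ψ.toFinset is nonempty, and there is an injective g : Fin m → V with g j ∈ G j \ ψ.toFinset for all j. -/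
/-!
Multilinearity of a monomial means its multiset of variables is `Nodup`. Adding the singletons
`{g j}` to `ψ = ∑ i, h i` keeps it `Nodup` exactly when `ψ` is `Nodup`, `g` is injective and `g`
avoids the variables of `ψ`, i.e. when `g` is an injective choice from the purged clauses
`G j \ ψ.toFinset`; the purged clauses are then nonempty since they contain `g j`.
-/

open Finset

theorem Multiset.sum_singleton_eq_map {ι V : Type*} [Fintype ι] (g : ι → V) :
    ∑ j, ({g j} : Multiset V) = univ.val.map g := by
  simpa using Multiset.sum_map_singleton (univ.val.map g)

theorem Multiset.nodup_add_sum_singleton_iff {ι V : Type*} [Fintype ι] (s : Multiset V)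
    (g : ι → V) :
    (s + ∑ j, ({g j} : Multiset V)).Nodup ↔ s.Nodup ∧ Function.Injective g ∧ ∀ j, g j ∉ s := by
  rw [Multiset.sum_singleton_eq_map, Multiset.nodup_add,
    Multiset.nodup_map_iff_inj_on univ.nodup]
  simp [Function.Injective, Multiset.disjoint_right]

theorem piSigmaPi_times_piSigma_multilinear_iff_purged_general
    {V : Type*} [DecidableEq V] {k m : ℕ}
    (f : Fin k → Finset (Multiset V))
    (G : Fin m → Finset V) :
    (∃ (h : Fin k → Multiset V) (g : Fin m → V),
      (∀ i, h i ∈ f i) ∧ (∀ j, g j ∈ G j) ∧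
      ∀ v : V, ((∑ i, h i) + ∑ j, ({g j} : Multiset V)).count v ≤ 1) ↔
    (∃ h : Fin k → Multiset V, (∀ i, h i ∈ f i) ∧
      (∀ v : V, (∑ i, h i).count v ≤ 1) ∧
      (∀ j, (G j \ (∑ i, h i).toFinset).Nonempty) ∧
      ∃ g : Fin m → V, Function.Injective g ∧
        ∀ j, g j ∈ G j \ (∑ i, h i).toFinset) := by
  simp only [← Multiset.nodup_iff_count_le_one, Multiset.nodup_add_sum_singleton_iff,
    Finset.Nonempty, Finset.mem_sdiff, Multiset.mem_toFinset]
  constructor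
  · rintro ⟨h, g, hf, hG, hψ, hinj, havoid⟩
    exact ⟨h, hf, hψ, fun j => ⟨g j, hG j, havoid j⟩, g, hinj, fun j => ⟨hG j, havoid j⟩⟩
  · rintro ⟨h, hf, hψ, -, g, hinj, hg⟩
    exact ⟨h, g, hf, fun j => (hg j).1, hψ, hinj, fun j => (hg j).2⟩

/-- Purging correctness for ΠΣΠ × ΠΣ polynomials (Theorem 3 of the
paper).  The product of a ΠΣΠ polynomial `f` (clauses of terms, each term a
multiset of variables) and a ΠΣ polynomial `G` (clauses of single variables)
has a multilinear monomial iff some choice of terms `h` from `f` is itself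
multilinear, all purged clauses `G j \ ψ.toFinset` are nonempty, and the purged
ΠΣ polynomial has an injective choice. -/
theorem piSigmaPi_times_piSigma_multilinear_iff_purged
    {V : Type*} [DecidableEq V] {k m : ℕ}
    (f : Fin k → Finset (Multiset V)) (hf : ∀ i, (f i).Nonempty)
    (G : Fin m → Finset V) (hG : ∀ j, (G j).Nonempty) :
    (∃ (h : Fin k → Multiset V) (g : Fin m → V),
      (∀ i, h i ∈ f i) ∧ (∀ j, g j ∈ G j) ∧
      ∀ v : V, ((∑ i, h i) + ∑ j, ({g j} : Multiset V)).count v ≤ 1) ↔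
    (∃ h : Fin k → Multiset V, (∀ i, h i ∈ f i) ∧
      (∀ v : V, (∑ i, h i).count v ≤ 1) ∧
      (∀ j, (G j \ (∑ i, h i).toFinset).Nonempty) ∧
      ∃ g : Fin m → V, Function.Injective g ∧
        ∀ j, g j ∈ G j \ (∑ i, h i).toFinset) :=
  piSigmaPi_times_piSigma_multilinear_iff_purged_general f G
end

section
/- Let V have decidable equality, let ι be a finite index type, and let f : ι → Finset (Multiset V) give nonempty clauses of terms. Suppose ι is partitioned into sets A and B, and there is a partial selection π assigning to each a ∈ A a term π a ∈ f a such that the multiset ∑_{a ∈ A} π a has every multiplicity at most 1 and no variable occurring in ∑_{a ∈ A} π a occurs in any term of any clause f b with b ∈ B. Then the full polynomial ∏_{i ∈ ι} f i has a multilinear monomial in its sum-product expansion if and only if the subproduct ∏_{b ∈ B} f b has a multilinear monomial in its sum-product expansion. -/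
/-!
Splitting the product along `A ∪ B`, a monomial of the whole polynomial is multilinear iff its
`A`-part and its `B`-part are multilinear and share no variable. Dropping the `A`-part proves one
direction; for the other, complete any multilinear monomial of the `B`-subproduct by the
selection `π` on `A`, which is multilinear and variable-disjoint from every term of the `B`-clauses.
-/

open Finset

theorem Finset.sum_union_piecewise {ι M : Type*} [DecidableEq ι] [AddCommMonoid M]
    {A B : Finset ι} (hAB : Disjoint A B) (f g : ι → M) :
    ∑ i ∈ A ∪ B, A.piecewise f g i = ∑ i ∈ A, f i + ∑ i ∈ B, g i := by
  rw [sum_union hAB]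
  congr 1
  · exact sum_congr rfl fun i hi => piecewise_eq_of_mem _ _ _ hi
  · exact sum_congr rfl fun i hi => piecewise_eq_of_notMem _ _ _ (disjoint_right.1 hAB hi)

theorem Finset.piecewise_mem_of_union {ι α : Type*} [DecidableEq ι] {A B : Finset ι}
    {S : ι → Set α} {f g : ι → α} (hf : ∀ i ∈ A, f i ∈ S i) (hg : ∀ i ∈ B, g i ∈ S i)
    {i : ι} (hi : i ∈ A ∪ B) : A.piecewise f g i ∈ S i := by
  by_cases hiA : i ∈ A
  · rw [piecewise_eq_of_mem _ _ _ hiA]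
    exact hf i hiA
  · rw [piecewise_eq_of_notMem _ _ _ hiA]
    exact hg i ((mem_union.1 hi).resolve_left hiA)

theorem purging_invariant_general {V ι : Type*} [DecidableEq V] [Fintype ι] [DecidableEq ι]
    (f : ι → Finset (Multiset V))
    (A B : Finset ι) (hcover : A ∪ B = Finset.univ) (hdisj : Disjoint A B)
    (π : ι → Multiset V) (hπ : ∀ a ∈ A, π a ∈ f a)
    (hml : ∀ v : V, (∑ a ∈ A, π a).count v ≤ 1)
    (hsep : ∀ v : V, v ∈ (∑ a ∈ A, π a) → ∀ b ∈ B, ∀ t ∈ f b, v ∉ t) :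
    (∃ h : ι → Multiset V, (∀ i, h i ∈ f i) ∧
      ∀ v : V, (∑ i, h i).count v ≤ 1) ↔
    (∃ h : ι → Multiset V, (∀ b ∈ B, h b ∈ f b) ∧
      ∀ v : V, (∑ b ∈ B, h b).count v ≤ 1) := by
  simp only [← Multiset.nodup_iff_count_le_one] at hml ⊢
  constructor
  · rintro ⟨h, hh, hnodup⟩
    rw [← hcover, sum_union hdisj, Multiset.nodup_add] at hnodup
    exact ⟨h, fun b _ => hh b, hnodup.2.1⟩
  · rintro ⟨h, hh, hnodup⟩
    have hsepB : Disjoint (∑ a ∈ A, π a) (∑ b ∈ B, h b) :=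
      Multiset.disjoint_finsetSum_right.2 fun b hb =>
        Multiset.disjoint_left.2 fun hv => hsep _ hv b hb _ (hh b hb)
    refine ⟨A.piecewise π h, fun i => ?_, ?_⟩
    · exact piecewise_mem_of_union (S := fun i => (f i : Set (Multiset V))) hπ hh
        (hcover ▸ mem_univ i)
    · rw [← hcover, sum_union_piecewise hdisj, Multiset.nodup_add]
      exact ⟨hml, hnodup, hsepB⟩

/-- The purging invariant of Theorem 4.  If the index set of a
ΠΣΠ polynomial is partitioned into `A` and `B`, and on `A` there is a partial
selection `π` of one term per clause whose multiset sum is multilinear and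
shares no variable with any term of any clause indexed by `B`, then the whole
polynomial has a multilinear monomial iff the subproduct over `B` does. -/
theorem purging_invariant {V ι : Type*} [DecidableEq V] [Fintype ι] [DecidableEq ι]
    (f : ι → Finset (Multiset V)) (hf : ∀ i, (f i).Nonempty)
    (A B : Finset ι) (hcover : A ∪ B = Finset.univ) (hdisj : Disjoint A B)
    (π : ι → Multiset V) (hπ : ∀ a ∈ A, π a ∈ f a)
    (hml : ∀ v : V, (∑ a ∈ A, π a).count v ≤ 1)
    (hsep : ∀ v : V, v ∈ (∑ a ∈ A, π a) → ∀ b ∈ B, ∀ t ∈ f b, v ∉ t) :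
    (∃ h : ι → Multiset V, (∀ i, h i ∈ f i) ∧
      ∀ v : V, (∑ i, h i).count v ≤ 1) ↔
    (∃ h : ι → Multiset V, (∀ b ∈ B, h b ∈ f b) ∧
      ∀ v : V, (∑ b ∈ B, h b).count v ≤ 1) :=
  purging_invariant_general f A B hcover hdisj π hπ hml hsep
end

section
/- Let V have decidable equality and let T : Fin m → Fin 3 → Multiset V give the terms of a ΠΣ3Π polynomial f with m clauses (clause i has the three terms T i 0, T i 1, T i 2). Work over the extended variable type W := V ⊕ (Fin m × Fin 4), writing u i := Sum.inr (i,0), v i := Sum.inr (i,1), w i := Sum.inr (i,2), z i := Sum.inr (i,3). Define the polynomial p(f) over W with 4m clauses: for each i ∈ Fin m, the two-term clauses {(T i 0).map Sum.inl + {u i}, {v i}}, {(T i 1).map Sum.inl + {u i}, {w i}}, {(T i 2).map Sum.inl + {u i}, {z i}}, and the three-term clause {{v i}, {w i}, {z i}}. Then f has a multilinear monomial in its sum-product expansion (i.e., there exists g : Fin m → Fin 3 such that the multiset ∑_i T i (g i) has every multiplicity at most 1) if and only if p(f) has a multilinear monomial in its sum-product expansion. -/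
/-!
Multilinearity of a monomial is `Multiset.Nodup` of the chosen sum. A multilinear choice `g`
for `f` lifts to `p(f)`: in gadget `i` take `T i (g i) · u i` from clause `g i`, the fresh
variables of the other two binomial clauses, and the fresh variable of clause `g i` from the
last clause, so that gadget `i` contributes `T i (g i)` and each of `u i, v i, w i, z i` once.
Conversely, if the last clause of gadget `i` picks the fresh variable of clause `k`, that
clause cannot pick it again, so it picks `T i k · u i`; these terms form a sub-multiset of the
monomial of `p(f)`, hence are multilinear.
-/

def gadgetClauses {V : Type*} [DecidableEq V] {m : ℕ}
    (T : Fin m → Fin 3 → Multiset V) (i : Fin m) :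
    Fin 4 → Finset (Multiset (V ⊕ (Fin m × Fin 4))) :=
  ![{(T i 0).map Sum.inl + {Sum.inr (i, 0)}, {Sum.inr (i, 1)}},
    {(T i 1).map Sum.inl + {Sum.inr (i, 0)}, {Sum.inr (i, 2)}},
    {(T i 2).map Sum.inl + {Sum.inr (i, 0)}, {Sum.inr (i, 3)}},
    {{Sum.inr (i, 1)}, {Sum.inr (i, 2)}, {Sum.inr (i, 3)}}]

theorem Multiset.disjoint_of_nodup_sum {ι α : Type*} [DecidableEq ι] {s : Finset ι}
    {f : ι → Multiset α} (hs : (∑ c ∈ s, f c).Nodup) {i j : ι} (hi : i ∈ s) (hj : j ∈ s)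
    (hij : i ≠ j) :
    Disjoint (f i) (f j) := by
  have hle : f i + f j ≤ ∑ c ∈ s, f c := by
    rw [← Finset.sum_pair hij]
    exact Finset.sum_le_sum_of_subset (Finset.insert_subset hi (Finset.singleton_subset_iff.2 hj))
  exact (Multiset.nodup_add.1 (Multiset.nodup_of_le hle hs)).2.2

theorem Multiset.map_finset_sum {ι α β : Type*} (f : α → β) (s : Finset ι)
    (t : ι → Multiset α) : (∑ i ∈ s, t i).map f = ∑ i ∈ s, (t i).map f :=
  map_sum (Multiset.mapAddMonoidHom f) t s

section Gadget

variable {V : Type*} {m : ℕ} (T : Fin m → Fin 3 → Multiset V)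

theorem gadgetClauses_castSucc [DecidableEq V] (i : Fin m) (k : Fin 3) :
    gadgetClauses T i k.castSucc =
      {(T i k).map Sum.inl + {Sum.inr (i, 0)}, {Sum.inr (i, k.succ)}} := by
  fin_cases k <;> rfl

theorem exists_eq_of_mem_gadgetClauses_three [DecidableEq V] {i : Fin m}
    {t : Multiset (V ⊕ (Fin m × Fin 4))} (ht : t ∈ gadgetClauses T i 3) :
    ∃ k : Fin 3, t = {Sum.inr (i, k.succ)} := by
  simp only [gadgetClauses, Matrix.cons_val_three, Matrix.tail_cons, Matrix.head_cons,
    Finset.mem_insert, Finset.mem_singleton] at ht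
  rcases ht with rfl | rfl | rfl
  exacts [⟨0, rfl⟩, ⟨1, rfl⟩, ⟨2, rfl⟩]

def gadgetChoice (i : Fin m) (k : Fin 3) (j : Fin 4) : Multiset (V ⊕ (Fin m × Fin 4)) :=
  if j = k.castSucc then (T i k).map Sum.inl + {Sum.inr (i, 0)}
  else {Sum.inr (i, if j = 3 then k.succ else j + 1)}

theorem gadgetChoice_mem [DecidableEq V] (i : Fin m) (k : Fin 3) (j : Fin 4) :
    gadgetChoice T i k j ∈ gadgetClauses T i j := by
  fin_cases k <;> fin_cases j <;> simp [gadgetChoice, gadgetClauses]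

theorem sum_gadgetChoice (i : Fin m) (k : Fin 3) :
    ∑ j, gadgetChoice T i k j = (T i k).map Sum.inl + ∑ j, {Sum.inr (i, j)} := by
  fin_cases k <;> simp [gadgetChoice, Fin.sum_univ_four, -Multiset.singleton_add] <;> abel

theorem sum_gadgetChoice_eq (g : Fin m → Fin 3) :
    ∑ c : Fin m × Fin 4, gadgetChoice T c.1 (g c.1) c.2 =
      (∑ i, T i (g i)).map Sum.inl + (Finset.univ : Finset (Fin m × Fin 4)).val.map Sum.inr := by
  rw [Fintype.sum_prod_type]
  simp only [sum_gadgetChoice, Finset.sum_add_distrib]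
  rw [← Fintype.sum_prod_type' fun i j => ({Sum.inr (i, j)} : Multiset (V ⊕ (Fin m × Fin 4))),
    Multiset.map_finset_sum]
  congr 1
  rw [← Multiset.sum_map_singleton (Finset.univ.val.map Sum.inr), Multiset.map_map]
  rfl

theorem nodup_sum_gadgetChoice {g : Fin m → Fin 3} (hg : (∑ i, T i (g i)).Nodup) :
    (∑ c : Fin m × Fin 4, gadgetChoice T c.1 (g c.1) c.2).Nodup := by
  rw [sum_gadgetChoice_eq, Multiset.nodup_add]
  refine ⟨hg.map Sum.inl_injective, Finset.univ.nodup.map Sum.inr_injective, ?_⟩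
  simp [Multiset.disjoint_left]

theorem apply_castSucc_eq_of_nodup_sum [DecidableEq V]
    {h : Fin m × Fin 4 → Multiset (V ⊕ (Fin m × Fin 4))}
    (hmem : ∀ c, h c ∈ gadgetClauses T c.1 c.2) (hnodup : (∑ c, h c).Nodup)
    {i : Fin m} {k : Fin 3} (hk : h (i, 3) = {Sum.inr (i, k.succ)}) :
    h (i, k.castSucc) = (T i k).map Sum.inl + {Sum.inr (i, 0)} := by
  have hc := hmem (i, k.castSucc)
  rw [gadgetClauses_castSucc, Finset.mem_insert, Finset.mem_singleton] at hc
  refine hc.resolve_right fun hsingle => ?_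
  have hdisj := Multiset.disjoint_of_nodup_sum hnodup (Finset.mem_univ (i, k.castSucc))
    (Finset.mem_univ (i, 3)) (by simp [Fin.ext_iff, Nat.ne_of_lt k.is_lt])
  rw [hsingle, hk] at hdisj
  simp at hdisj

theorem exists_nodup_sum_of_mem_gadgetClauses [DecidableEq V]
    {h : Fin m × Fin 4 → Multiset (V ⊕ (Fin m × Fin 4))}
    (hmem : ∀ c, h c ∈ gadgetClauses T c.1 c.2) (hnodup : (∑ c, h c).Nodup) :
    ∃ k : Fin m → Fin 3, (∑ i, T i (k i)).Nodup := by
  choose k hk using fun i => exists_eq_of_mem_gadgetClauses_three T (hmem (i, 3))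
  refine ⟨k, (Multiset.nodup_map_iff_of_injective Sum.inl_injective).1
    (Multiset.nodup_of_le ?_ hnodup)⟩
  calc (∑ i, T i (k i)).map Sum.inl = ∑ i, (T i (k i)).map Sum.inl :=
        Multiset.map_finset_sum _ _ _
    _ ≤ ∑ i, h (i, (k i).castSucc) := Finset.sum_le_sum fun i _ => by
        rw [apply_castSucc_eq_of_nodup_sum T hmem hnodup (hk i)]
        exact le_self_add
    _ ≤ ∑ i, ∑ j, h (i, j) := Finset.sum_le_sum fun i _ =>
        Finset.single_le_sum (fun _ _ => Multiset.zero_le _) (Finset.mem_univ _)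
    _ = ∑ c, h c := (Fintype.sum_prod_type _).symm

end Gadget

/-- Reduction correctness of Theorem 5.  A ΠΣ3Π polynomial with
terms `T` has a multilinear monomial iff the polynomial `p(f)` with the `4 m`
gadget clauses `gadgetClauses T` has a multilinear monomial. -/
theorem piSigma3Pi_multilinear_iff_gadget {V : Type*} [DecidableEq V] {m : ℕ}
    (T : Fin m → Fin 3 → Multiset V) :
    (∃ g : Fin m → Fin 3, ∀ x : V, (∑ i, T i (g i)).count x ≤ 1) ↔
    (∃ h : Fin m × Fin 4 → Multiset (V ⊕ (Fin m × Fin 4)),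
      (∀ c : Fin m × Fin 4, h c ∈ gadgetClauses T c.1 c.2) ∧
      ∀ x : V ⊕ (Fin m × Fin 4), (∑ c : Fin m × Fin 4, h c).count x ≤ 1) := by
  simp only [← Multiset.nodup_iff_count_le_one]
  constructor
  · rintro ⟨g, hg⟩
    exact ⟨fun c => gadgetChoice T c.1 (g c.1) c.2, fun c => gadgetChoice_mem T _ _ _,
      nodup_sum_gadgetChoice T hg⟩
  · rintro ⟨h, hmem, hnodup⟩
    exact exists_nodup_sum_of_mem_gadgetClauses T hmem hnodup
end

section
/- Let V have decidable equality and let T : Fin m → Fin 3 → Finset V give the terms of a 2-ΠΣ3Π polynomial f with m clauses, each term being multilinear with at most 2 variables (card (T i j) ≤ 2). Work over W := V ⊕ (Fin m × Fin 2), writing u i := Sum.inr (i,0) and v i := Sum.inr (i,1). Define the polynomial p(f) over W with 3m two-term clauses: for each i ∈ Fin m and j ∈ Fin 3, the clause whose two terms are the multiset 2·((T i j).val.map Sum.inl) + 2·{u i} (i.e., T i j squared times u i squared) and the singleton {v i}. Then f has a multilinear monomial in its sum-product expansion (there exists g : Fin m → Fin 3 with the sets T i (g i), i ∈ Fin m,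 pairwise disjoint) if and only if p(f) has a 3-monomial in its sum-product expansion (a choice of one term from each of the 3m clauses whose multiset sum has every multiplicity at most 2). -/
/-!
Choosing the term `T i (g i)` in every clause of `f` corresponds to taking, among the three gadget
clauses of block `i`, the squared term of clause `(i, g i)` and `v i` from the other two. The
resulting monomial is the square of `∏ᵢ T i (g i) · u i · v i`, so it is a 3-monomial exactly when
the chosen terms are pairwise disjoint. Conversely, a 3-monomial cannot take `v i` from all three
clauses of a block (that would give `v i ^ 3`), and two chosen squared terms sharing a variable `a`
would give `a ^ 4`.
-/

/-- The clauses of the 3-ΠΣ2Π6 polynomial `p(f)` built from a 2-ΠΣ3Π polynomial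
with multilinear terms `T` (Section 7 of the paper): for each original clause
`i` and each `j : Fin 3`, with fresh variables `u i = Sum.inr (i,0)` and
`v i = Sum.inr (i,1)`, the two-term clause `(T i j)² · (u i)² + v i`. -/
def squareGadgetClause {V : Type*} [DecidableEq V] {m : ℕ}
    (T : Fin m → Fin 3 → Finset V) (c : Fin m × Fin 3) :
    Finset (Multiset (V ⊕ (Fin m × Fin 2))) :=
  {2 • ((T c.1 c.2).val.map Sum.inl) +
      2 • ({Sum.inr (c.1, 0)} : Multiset (V ⊕ (Fin m × Fin 2))),
   {Sum.inr (c.1, 1)}}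

open Multiset Function

theorem Multiset.nodup_finset_sum {ι α : Type*} {s : Finset ι} {f : ι → Multiset α}
    (hf : ∀ i ∈ s, (f i).Nodup) (hd : (s : Set ι).Pairwise (Disjoint on f)) :
    (∑ i ∈ s, f i).Nodup :=
  nodup_bind.2 ⟨hf, s.nodup.pairwise fun _ hi _ hj hne => hd hi hj hne⟩

theorem Finset.sum_ite_eq_add_nsmul {ι M : Type*} [Fintype ι] [DecidableEq ι] [AddCommMonoid M]
    (k : ι) (a b : M) :
    ∑ j, (if j = k then a else b) = a + (Fintype.card ι - 1) • b := by
  rw [← Finset.add_sum_erase _ _ (Finset.mem_univ k), if_pos rfl,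
    Finset.sum_congr rfl fun j hj => if_neg (Finset.ne_of_mem_erase hj), Finset.sum_const,
    Finset.card_erase_of_mem (Finset.mem_univ k), Finset.card_univ]

namespace SquareGadget

variable {V : Type*} {m : ℕ} (T : Fin m → Fin 3 → Finset V)

def squareTerm (i : Fin m) (j : Fin 3) : Multiset (V ⊕ (Fin m × Fin 2)) :=
  2 • ((T i j).val.map Sum.inl) + 2 • {Sum.inr (i, 0)}

theorem mem_squareGadgetClause [DecidableEq V] {i : Fin m} {j : Fin 3}
    {t : Multiset (V ⊕ (Fin m × Fin 2))} :
    t ∈ squareGadgetClause T (i, j) ↔ t = squareTerm T i j ∨ t = {Sum.inr (i, 1)} := by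
  simp [squareGadgetClause, squareTerm]

theorem replicate_two_le_squareTerm {i : Fin m} {j : Fin 3} {a : V} (ha : a ∈ T i j) :
    replicate 2 (Sum.inl a) ≤ squareTerm T i j :=
  calc replicate 2 (Sum.inl a) = 2 • {Sum.inl a} := (nsmul_singleton _ _).symm
    _ ≤ 2 • ((T i j).val.map Sum.inl) :=
      nsmul_le_nsmul_right (singleton_le.2 (mem_map_of_mem _ ha)) 2
    _ ≤ squareTerm T i j := le_add_right le_rfl

section Forward

variable (g : Fin m → Fin 3)

def gadgetChoice (c : Fin m × Fin 3) : Multiset (V ⊕ (Fin m × Fin 2)) :=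
  if c.2 = g c.1 then squareTerm T c.1 (g c.1) else {Sum.inr (c.1, 1)}

theorem gadgetChoice_mem_squareGadgetClause [DecidableEq V] (c : Fin m × Fin 3) :
    gadgetChoice T g c ∈ squareGadgetClause T c := by
  obtain ⟨i, j⟩ := c
  by_cases hj : j = g i
  · subst hj
    simp [gadgetChoice, mem_squareGadgetClause]
  · simp [gadgetChoice, mem_squareGadgetClause, hj]

def blockVars (i : Fin m) : Multiset (V ⊕ (Fin m × Fin 2)) :=
  Sum.inr (i, 0) ::ₘ Sum.inr (i, 1) ::ₘ (T i (g i)).val.map Sum.inl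

theorem sum_gadgetChoice : ∑ c, gadgetChoice T g c = 2 • ∑ i, blockVars T g i := by
  rw [Fintype.sum_prod_type, Finset.smul_sum]
  refine Finset.sum_congr rfl fun i _ => ?_
  simp only [gadgetChoice]
  rw [Finset.sum_ite_eq_add_nsmul]
  simp only [squareTerm, blockVars, Fintype.card_fin, ← singleton_add, nsmul_add]
  abel

theorem nodup_sum_blockVars (hg : ∀ i i', i ≠ i' → Disjoint (T i (g i)) (T i' (g i'))) :
    (∑ i, blockVars T g i).Nodup := by
  refine nodup_finset_sum (fun i _ => ?_) fun i _ i' _ hne => ?_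
  · simpa [blockVars] using (T i (g i)).nodup.map Sum.inl_injective
  · simpa [blockVars, onFun, hne, Ne.symm hne, disjoint_map_map] using
      Finset.disjoint_left.1 (hg i i' hne)

theorem exists_threeMonomial_of_pairwise_disjoint [DecidableEq V]
    (hg : ∀ i i', i ≠ i' → Disjoint (T i (g i)) (T i' (g i'))) :
    ∃ h : Fin m × Fin 3 → Multiset (V ⊕ (Fin m × Fin 2)),
      (∀ c, h c ∈ squareGadgetClause T c) ∧ ∀ x, (∑ c, h c).count x ≤ 2 := by
  refine ⟨gadgetChoice T g, gadgetChoice_mem_squareGadgetClause T g, fun x => ?_⟩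
  rw [sum_gadgetChoice, count_nsmul]
  have := nodup_iff_count_le_one.1 (nodup_sum_blockVars T g hg) x
  omega

end Forward

section Backward

variable [DecidableEq V] {T} {h : Fin m × Fin 3 → Multiset (V ⊕ (Fin m × Fin 2))}

theorem exists_eq_squareTerm_of_threeMonomial (hmem : ∀ c, h c ∈ squareGadgetClause T c)
    (hcount : ∀ x, (∑ c, h c).count x ≤ 2) (i : Fin m) : ∃ j, h (i, j) = squareTerm T i j := by
  by_contra! hv
  have hvi (j : Fin 3) : h (i, j) = {Sum.inr (i, 1)} :=
    ((mem_squareGadgetClause T).1 (hmem (i, j))).resolve_left (hv j)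
  have hle : replicate 3 (Sum.inr (i, 1)) ≤ ∑ c, h c :=
    calc replicate 3 (Sum.inr (i, 1)) = ∑ j, h (i, j) := by
          simp [hvi, nsmul_singleton]
      _ ≤ ∑ c, h c := by
          rw [Fintype.sum_prod_type]
          exact Finset.single_le_sum (fun _ _ => zero_le _) (Finset.mem_univ i)
  have := (le_count_iff_replicate_le.2 hle).trans (hcount _)
  omega

theorem disjoint_of_eq_squareTerm (hcount : ∀ x, (∑ c, h c).count x ≤ 2) {i i' : Fin m}
    (hne : i ≠ i') {j j' : Fin 3} (hj : h (i, j) = squareTerm T i j)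
    (hj' : h (i', j') = squareTerm T i' j') : Disjoint (T i j) (T i' j') := by
  refine Finset.disjoint_left.2 fun a ha ha' => ?_
  have hle : replicate 4 (Sum.inl a) ≤ ∑ c, h c :=
    calc replicate 4 (Sum.inl a) = replicate 2 (Sum.inl a) + replicate 2 (Sum.inl a) :=
          replicate_add 2 2 _
      _ ≤ h (i, j) + h (i', j') := by
          rw [hj, hj']
          exact add_le_add (replicate_two_le_squareTerm T ha) (replicate_two_le_squareTerm T ha')
      _ = ∑ c ∈ {(i, j), (i', j')}, h c := (Finset.sum_pair (by simp [hne])).symm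
      _ ≤ ∑ c, h c := Finset.sum_le_sum_of_subset (Finset.subset_univ _)
  have := (le_count_iff_replicate_le.2 hle).trans (hcount _)
  omega

end Backward

end SquareGadget

theorem twoPiSigma3Pi_multilinear_iff_gadget_threeMonomial_general
    {V : Type*} [DecidableEq V] {m : ℕ}
    (T : Fin m → Fin 3 → Finset V) :
    (∃ g : Fin m → Fin 3, ∀ i i' : Fin m, i ≠ i' →
      Disjoint (T i (g i)) (T i' (g i'))) ↔
    (∃ h : Fin m × Fin 3 → Multiset (V ⊕ (Fin m × Fin 2)),
      (∀ c : Fin m × Fin 3, h c ∈ squareGadgetClause T c) ∧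
      ∀ x : V ⊕ (Fin m × Fin 2), (∑ c : Fin m × Fin 3, h c).count x ≤ 2) := by
  constructor
  · rintro ⟨g, hg⟩
    exact SquareGadget.exists_threeMonomial_of_pairwise_disjoint T g hg
  · rintro ⟨h, hmem, hcount⟩
    choose g hg using SquareGadget.exists_eq_squareTerm_of_threeMonomial hmem hcount
    exact ⟨g, fun i i' hne => SquareGadget.disjoint_of_eq_squareTerm hcount hne (hg i) (hg i')⟩

/-- Reduction correctness for 3-monomial testing (Section 7).
A 2-ΠΣ3Π polynomial with multilinear terms `T` (each of at most 2 variables)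
has a multilinear monomial iff the polynomial with the `3 m` clauses
`squareGadgetClause T` has a 3-monomial (every multiplicity at most 2). -/
theorem twoPiSigma3Pi_multilinear_iff_gadget_threeMonomial
    {V : Type*} [DecidableEq V] {m : ℕ}
    (T : Fin m → Fin 3 → Finset V) (hT : ∀ i j, (T i j).card ≤ 2) :
    (∃ g : Fin m → Fin 3, ∀ i i' : Fin m, i ≠ i' →
      Disjoint (T i (g i)) (T i' (g i'))) ↔
    (∃ h : Fin m × Fin 3 → Multiset (V ⊕ (Fin m × Fin 2)),
      (∀ c : Fin m × Fin 3, h c ∈ squareGadgetClause T c) ∧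
      ∀ x : V ⊕ (Fin m × Fin 2), (∑ c : Fin m × Fin 3, h c).count x ≤ 2) :=
  twoPiSigma3Pi_multilinear_iff_gadget_threeMonomial_general T
end

section
/- Let V have decidable equality, let T0, T1, T2 be finite sets over V, and let u, v be two distinct fresh variables not in V (formally work over W := V ⊕ Fin 2). Consider the three two-term clauses, for j ∈ {0,1,2}: {2·((T j).val.map Sum.inl) + 2·{u}, {v}}. Then a choice of one term from each of the three clauses yields a product multiset in which u has multiplicity at most 2 and v has multiplicity at most 2 if and only if exactly one index j selects the term 2·(T j) + 2·{u} (and the other two select {v}); in that case the product equals 2·(T j) + 2·{u} + 2·{v}. -/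
/-!
Each clause contributes `u²` through its first term and `v` through its second, and the first
term never contains `v`. So if `s` clauses select their first term, the product has `u`-degree
`2s` and `v`-degree `3 - s`; both are at most 2 exactly when `s = 1`.
-/

open Finset

section Selection

variable {ι α : Type*} [Fintype ι] [DecidableEq α] {u v : α} {k : ℕ}
  {a h : ι → Multiset α}

theorem Multiset.count_sum_eq_mul_card_filter (hu : ∀ i, (a i).count u = k) (huv : u ≠ v)
    (hh : ∀ i, h i = a i ∨ h i = {v}) :
    (∑ i, h i).count u = k * #{i | h i = a i} := by
  have hcount : ∀ i, (h i).count u = if h i = a i then k else 0 := by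
    intro i
    rcases hh i with hi | hi
    · simp [hi, hu]
    · split_ifs with hia
      · rw [hia, hu]
      · simp [hi, huv]
  rw [Multiset.count_sum', Finset.sum_congr rfl fun i _ => hcount i, ← Finset.sum_filter,
    Finset.sum_const, smul_eq_mul, mul_comm]

theorem Multiset.eq_singleton_iff_ne_of_count_eq_zero {b m : Multiset α} (hv : b.count v = 0)
    (hm : m = b ∨ m = {v}) : m = {v} ↔ m ≠ b := by
  have hb : b ≠ {v} := fun hbv => by simp [hbv] at hv
  rcases hm with rfl | rfl
  · simp [hb]
  · simp [hb.symm]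

theorem Multiset.count_sum_eq_card_filter_ne (hv : ∀ i, (a i).count v = 0)
    (hh : ∀ i, h i = a i ∨ h i = {v}) :
    (∑ i, h i).count v = #{i | h i ≠ a i} := by
  have hcount : ∀ i, (h i).count v = if h i ≠ a i then 1 else 0 := by
    intro i
    by_cases hia : h i = a i
    · simp [hia, hv]
    · rw [if_pos hia, (Multiset.eq_singleton_iff_ne_of_count_eq_zero (hv i) (hh i)).2 hia,
        Multiset.count_singleton_self]
  rw [Multiset.count_sum', Finset.sum_congr rfl fun i _ => hcount i, Finset.sum_boole,
    Nat.cast_id]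

theorem Multiset.count_le_and_count_lt_card_iff (hk : 0 < k) (hu : ∀ i, (a i).count u = k)
    (hv : ∀ i, (a i).count v = 0) (huv : u ≠ v) (hh : ∀ i, h i = a i ∨ h i = {v}) :
    ((∑ i, h i).count u ≤ k ∧ (∑ i, h i).count v < Fintype.card ι) ↔
      ∃ j, h j = a j ∧ ∀ j' ≠ j, h j' = {v} := by
  have hcard : #{i | h i = a i} + #{i | h i ≠ a i} = #(univ : Finset ι) :=
    Finset.card_filter_add_card_filter_not _
  rw [Multiset.count_sum_eq_mul_card_filter hu huv hh,
    Multiset.count_sum_eq_card_filter_ne hv hh, mul_le_iff_le_one_right hk, ← Finset.card_univ]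
  calc _ ↔ #{i | h i = a i} = 1 := by omega
    _ ↔ ∃ j, h j = a j ∧ ∀ j' ≠ j, h j' = {v} := by
      simp only [Finset.card_eq_one, Finset.eq_singleton_iff_unique_mem, Finset.mem_filter,
        Finset.mem_univ, true_and, Multiset.eq_singleton_iff_ne_of_count_eq_zero (hv _) (hh _),
        ne_eq]
      exact exists_congr fun _ => and_congr_right fun _ => forall_congr' fun _ => not_imp_not.symm

end Selection

theorem Finset.sum_univ_eq_add_nsmul_of_forall_ne {ι M : Type*} [Fintype ι] [DecidableEq ι]
    [AddCommMonoid M] {f : ι → M} {s : M} (j : ι) (hf : ∀ i ≠ j, f i = s) :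
    ∑ i, f i = f j + (Fintype.card ι - 1) • s := by
  rw [Fintype.sum_eq_add_sum_compl j, Finset.sum_congr rfl fun i hi => hf i (by simpa using hi),
    Finset.sum_const, Finset.card_compl, Finset.card_singleton]

/-- Gadget analysis for 3-monomial testing (Section 7).  Over
`W := V ⊕ Fin 2` with fresh variables `u = Sum.inr 0`, `v = Sum.inr 1`,
consider the three two-term clauses `(T j)²·u² + v` for `j : Fin 3`.  A choice
of one term per clause yields a product in which both `u` and `v` have
multiplicity at most 2 iff exactly one index `j` selects the squared term
`(T j)²·u²` and the other two select `v`; in that case the product equals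
`(T j)²·u²·v²`. -/
theorem square_gadget_products {V : Type*} [DecidableEq V]
    (T0 T1 T2 : Finset V)
    (C : Fin 3 → Finset (Multiset (V ⊕ Fin 2)))
    (hC : C = fun j => {2 • ((![T0, T1, T2] j).val.map Sum.inl) +
        2 • ({Sum.inr 0} : Multiset (V ⊕ Fin 2)), {Sum.inr 1}}) :
    ∀ h : Fin 3 → Multiset (V ⊕ Fin 2), (∀ c, h c ∈ C c) →
      (((∑ c, h c).count (Sum.inr 0) ≤ 2 ∧ (∑ c, h c).count (Sum.inr 1) ≤ 2) ↔
        (∃ j : Fin 3,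
          h j = 2 • ((![T0, T1, T2] j).val.map Sum.inl) +
            2 • ({Sum.inr 0} : Multiset (V ⊕ Fin 2)) ∧
          (∀ j' : Fin 3, j' ≠ j → h j' = {Sum.inr 1}) ∧
          ∑ c, h c = 2 • ((![T0, T1, T2] j).val.map Sum.inl) +
            2 • ({Sum.inr 0} : Multiset (V ⊕ Fin 2)) +
            2 • ({Sum.inr 1} : Multiset (V ⊕ Fin 2)))) := by
  subst hC
  intro h hh
  set a : Fin 3 → Multiset (V ⊕ Fin 2) := fun j =>
    2 • ((![T0, T1, T2] j).val.map Sum.inl) + 2 • {Sum.inr 0}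
  have hchoice : ∀ i, h i = a i ∨ h i = {Sum.inr 1} := by simpa using hh
  have hu : ∀ i, (a i).count (Sum.inr 0) = 2 := by simp [a]
  have hv : ∀ i, (a i).count (Sum.inr 1) = 0 := by simp [a]
  have hselect := Multiset.count_le_and_count_lt_card_iff two_pos hu hv (by simp) hchoice
  rw [Fintype.card_fin, Nat.lt_succ_iff] at hselect
  rw [hselect]
  refine exists_congr fun j => and_congr_right fun hj => (and_iff_left_of_imp fun hrest => ?_).symm
  rw [Finset.sum_univ_eq_add_nsmul_of_forall_ne j hrest, hj]
  rfl
end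

section
/- Let c ≥ 2 be an integer, let V have decidable equality, and let F : Fin m → Finset V be a ΠΣ polynomial with m nonempty clauses. Define the simple bipartite graph B on (Fin m) ⊕ (V × Fin (c−1)) in which Sum.inl i is adjacent to Sum.inr (v, t) if and only if v ∈ F i, with no other adjacencies. Then F has a c-monomial in its sum-product expansion — i.e., there exists g : Fin m → V with g i ∈ F i for all i and, for every v ∈ V, the number of indices i with g i = v is at most c−1 — if and only if B contains a matching with exactly m edges. -/
/-!
A choice `g` is a `c`-monomial exactly when the clauses choosing a common variable `v` can be
given distinct copies `(v, t)`, `t : Fin (c - 1)`, i.e. when `i ↦ (g i, t i)` is injective for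
some `t`; such an injection is a matching of the clause side into the copies. Conversely, in a
bipartite graph the edges of a matching are in bijection with its vertices on one side, so a
matching with `m` edges saturates all `m` clause vertices and pairs them injectively with copies.
-/

/-- The bipartite graph for `c`-monomial testing in a ΠΣ polynomial: each
variable `v` is duplicated into `c - 1` vertices `Sum.inr (v, t)`, and clause
vertex `Sum.inl i` is adjacent to `Sum.inr (v, t)` exactly when `v ∈ F i`. -/
def cMonomialBipartiteGraph {V : Type*} {m : ℕ} (c : ℕ) (F : Fin m → Finset V) :
    SimpleGraph (Fin m ⊕ (V × Fin (c - 1))) :=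
  SimpleGraph.fromRel (fun x y => ∃ (i : Fin m) (v : V) (t : Fin (c - 1)),
    x = Sum.inl i ∧ y = Sum.inr (v, t) ∧ v ∈ F i)

open Function Set Sum

theorem forall_card_fiber_le_iff_exists_injective {ι β : Type*} [Fintype ι] [DecidableEq β]
    (g : ι → β) (k : ℕ) :
    (∀ b, (Finset.univ.filter fun i => g i = b).card ≤ k) ↔
      ∃ t : ι → Fin k, Injective fun i => (g i, t i) := by
  constructor
  · intro hg
    have e : ∀ b, {i // g i = b} ↪ Fin k := fun b =>
      (Embedding.nonempty_of_card_le (by simpa [Fintype.card_subtype] using hg b)).some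
    let φ : ι ↪ β × Fin k := (Equiv.sigmaFiberEquiv g).symm.toEmbedding.trans
      ((Embedding.sigmaMap (Embedding.refl β) e).trans (Equiv.sigmaEquivProd β (Fin k)).toEmbedding)
    exact ⟨fun i => (φ i).2, φ.injective⟩
  · rintro ⟨t, ht⟩ b
    calc _ ≤ (Finset.univ : Finset (Fin k)).card :=
          Finset.card_le_card_of_injOn t (fun _ _ => Finset.mem_univ _) fun i hi j hj hij => by
            simp only [Finset.mem_coe, Finset.mem_filter, Finset.mem_univ, true_and] at hi hj
            exact ht (Prod.ext (hi.trans hj.symm) hij)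
      _ = k := by simp

namespace SimpleGraph

theorem Subgraph.IsMatching.ncard_edgeSet_eq_ncard_verts_inter {V : Type*} {G : SimpleGraph V}
    {s t : Set V} (hG : G.IsBipartiteWith s t) {M : G.Subgraph} (hM : M.IsMatching) :
    M.edgeSet.ncard = (M.verts ∩ s).ncard := by
  have not_adj : ∀ ⦃v w⦄, v ∈ s → w ∈ s → ¬ M.Adj v w := fun v w hv hw hvw => by
    rcases hG.mem_of_adj (M.adj_sub hvw) with ⟨-, hw'⟩ | ⟨hv', -⟩
    · exact hG.disjoint.notMem_of_mem_left hw hw'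
    · exact hG.disjoint.notMem_of_mem_left hv hv'
  symm
  refine ncard_congr (fun v hv => (hM.toEdge ⟨v, hv.1⟩).1) (fun v hv => (hM.toEdge _).2)
    (fun v w hv hw hvw => ?_) ?_
  · obtain ⟨v', hv', -⟩ := hM hv.1
    obtain ⟨w', hw', -⟩ := hM hw.1
    simp only [hM.toEdge_eq_of_adj hv', hM.toEdge_eq_of_adj hw', Sym2.eq_iff] at hvw
    rcases hvw with ⟨h, -⟩ | ⟨rfl, rfl⟩
    · exact h
    · exact absurd hv' (not_adj hv.2 hw.2)
  · intro e he
    induction e using Sym2.ind with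
    | _ x y =>
      rcases hG.mem_of_adj (M.adj_sub he) with ⟨hx, -⟩ | ⟨-, hy⟩
      · exact ⟨x, ⟨he.fst_mem, hx⟩, by rw [hM.toEdge_eq_of_adj he]⟩
      · exact ⟨y, ⟨he.snd_mem, hy⟩, by rw [hM.toEdge_eq_of_adj he.symm]; exact Sym2.eq_swap⟩

variable {α β : Type*} {G : SimpleGraph (α ⊕ β)}

theorem exists_isMatching_ncard_edgeSet_of_injective {φ : α → β} (hφ : Injective φ)
    (hadj : ∀ a, G.Adj (inl a) (inr (φ a))) :
    ∃ M : G.Subgraph, M.IsMatching ∧ M.edgeSet.ncard = Nat.card α := by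
  refine ⟨⨆ a, G.subgraphOfAdj (hadj a),
    .iSup (fun a => .subgraphOfAdj _) fun a b hab => ?_, ?_⟩
  · simp [support_subgraphOfAdj, hab.symm, (hφ.ne hab).symm]
  · simp only [Subgraph.edgeSet_iSup, edgeSet_subgraphOfAdj, iUnion_singleton_eq_range]
    exact ncard_range_of_injective fun a b h => (by simpa using h : a = b ∧ _).1

theorem exists_injective_of_isMatching [Finite α]
    (hG : G.IsBipartiteWith (range inl) (range inr)) {M : G.Subgraph} (hM : M.IsMatching)
    (hcard : M.edgeSet.ncard = Nat.card α) :
    ∃ φ : α → β, Injective φ ∧ ∀ a, M.Adj (inl a) (inr (φ a)) := by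
  have hcover : range inl ⊆ M.verts := by
    have hinter : M.verts ∩ range inl = range inl :=
      eq_of_subset_of_ncard_le inter_subset_right (by
        rw [← hM.ncard_edgeSet_eq_ncard_verts_inter hG, hcard,
          ncard_range_of_injective inl_injective])
    exact hinter ▸ inter_subset_left
  have hmatched : ∀ a, ∃ b, M.Adj (inl a) (inr b) := by
    intro a
    obtain ⟨y, hy, -⟩ := hM (hcover ⟨a, rfl⟩)
    rcases hG.mem_of_adj (M.adj_sub hy) with ⟨-, b, rfl⟩ | ⟨⟨b, hb⟩, -⟩
    · exact ⟨b, hy⟩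
    · exact absurd hb inr_ne_inl
  choose φ hφ using hmatched
  exact ⟨φ, fun a a' h => inl_injective (hM.eq_of_adj_right (hφ a) (h ▸ hφ a')), hφ⟩

theorem exists_isMatching_ncard_edgeSet_eq_iff [Finite α]
    (hG : G.IsBipartiteWith (range inl) (range inr)) :
    (∃ M : G.Subgraph, M.IsMatching ∧ M.edgeSet.ncard = Nat.card α) ↔
      ∃ φ : α → β, Injective φ ∧ ∀ a, G.Adj (inl a) (inr (φ a)) := by
  constructor
  · rintro ⟨M, hM, hcard⟩
    obtain ⟨φ, hφ, hadj⟩ := exists_injective_of_isMatching hG hM hcard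
    exact ⟨φ, hφ, fun a => M.adj_sub (hadj a)⟩
  · rintro ⟨φ, hφ, hadj⟩
    exact exists_isMatching_ncard_edgeSet_of_injective hφ hadj

end SimpleGraph

section cMonomialBipartiteGraph

variable {V : Type*} {m : ℕ} (c : ℕ) (F : Fin m → Finset V)

theorem cMonomialBipartiteGraph_adj_inl_inr (i : Fin m) (w : V × Fin (c - 1)) :
    (cMonomialBipartiteGraph c F).Adj (inl i) (inr w) ↔ w.1 ∈ F i := by
  obtain ⟨v, t⟩ := w
  simp [cMonomialBipartiteGraph]

theorem cMonomialBipartiteGraph_isBipartiteWith :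
    (cMonomialBipartiteGraph c F).IsBipartiteWith (range inl) (range inr) where
  disjoint := isCompl_range_inl_range_inr.disjoint
  mem_of_adj := by
    rintro _ _ ⟨-, ⟨i, v, t, rfl, rfl, -⟩ | ⟨i, v, t, rfl, rfl, -⟩⟩ <;> simp

end cMonomialBipartiteGraph

theorem piSigma_cMonomial_iff_matching_general {V : Type*} [DecidableEq V] {m c : ℕ}
    (F : Fin m → Finset V) :
    (∃ g : Fin m → V, (∀ i, g i ∈ F i) ∧
      ∀ v : V, (Finset.univ.filter fun i => g i = v).card ≤ c - 1) ↔
    (∃ M : (cMonomialBipartiteGraph c F).Subgraph,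
      M.IsMatching ∧ M.edgeSet.ncard = m) := by
  have hmatching := SimpleGraph.exists_isMatching_ncard_edgeSet_eq_iff
    (cMonomialBipartiteGraph_isBipartiteWith c F)
  rw [Nat.card_fin] at hmatching
  simp only [hmatching, cMonomialBipartiteGraph_adj_inl_inr,
    forall_card_fiber_le_iff_exists_injective]
  constructor
  · rintro ⟨g, hg, t, ht⟩
    exact ⟨fun i => (g i, t i), ht, hg⟩
  · rintro ⟨φ, hφ, hφF⟩
    exact ⟨fun i => (φ i).1, hφF, fun i => (φ i).2, hφ⟩

/-- Matching reduction for `c`-monomial testing in ΠΣ polynomials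
(Section 7).  For `c ≥ 2`, a ΠΣ polynomial `F` with `m` nonempty clauses has a
`c`-monomial (a choice of one variable per clause in which every variable is
chosen at most `c - 1` times) iff the bipartite graph contains a matching with
exactly `m` edges. -/
theorem piSigma_cMonomial_iff_matching {V : Type*} [DecidableEq V] {m c : ℕ}
    (hc : 2 ≤ c) (F : Fin m → Finset V) (hF : ∀ i, (F i).Nonempty) :
    (∃ g : Fin m → V, (∀ i, g i ∈ F i) ∧
      ∀ v : V, (Finset.univ.filter fun i => g i = v).card ≤ c - 1) ↔
    (∃ M : (cMonomialBipartiteGraph c F).Subgraph,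
      M.IsMatching ∧ M.edgeSet.ncard = m) :=
  piSigma_cMonomial_iff_matching_general F
end

section
/- Let V have decidable equality and let T : Fin m → Fin 3 → Finset V give the (multilinear) terms of a ΠΣ3Π polynomial f with m clauses. Define the simple graph G on Fin m × Fin 3 in which (i, j) is adjacent to (i', j') if and only if i ≠ i' and the sets T i j and T i' j' are disjoint. Then f has a multilinear monomial in its sum-product expansion — i.e., there exists g : Fin m → Fin 3 such that for all i ≠ i' the sets T i (g i) and T i' (g i') are disjoint — if and only if G contains a clique of size m. -/
/-!
A choice `g` of one term per clause is the same thing as the section `i ↦ (i, g i)` of the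
vertex set, and it is multilinear iff that section is a clique. Conversely, vertices of one
clause are never adjacent, so a clique meets every clause at most once; a clique of size `m`
therefore meets each of the `m` clauses exactly once, i.e. it contains a section.
-/

/-- The clique-reduction graph of Theorem 8: vertices are the term positions
`(i, j) : Fin m × Fin 3`, and `(i, j)` is adjacent to `(i', j')` iff they come
from different clauses (`i ≠ i'`) and the terms `T i j`, `T i' j'` share no
variable. -/
def termCliqueGraph {V : Type*} [DecidableEq V] {m : ℕ}
    (T : Fin m → Fin 3 → Finset V) : SimpleGraph (Fin m × Fin 3) where
  Adj p q := p.1 ≠ q.1 ∧ Disjoint (T p.1 p.2) (T q.1 q.2)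
  symm := ⟨fun _ _ h => ⟨h.1.symm, h.2.symm⟩⟩
  loopless := ⟨fun _ h => h.1 rfl⟩

open Finset

namespace SimpleGraph

variable {ι κ : Type*} [Fintype ι] (G : SimpleGraph (ι × κ))

theorem isNClique_map_section {g : ι → κ} (hg : ∀ i i', i ≠ i' → G.Adj (i, g i) (i', g i')) :
    G.IsNClique (Fintype.card ι)
      (univ.map ⟨fun i => (i, g i), fun _ _ h => (Prod.ext_iff.mp h).1⟩) := by
  refine ⟨?_, by simp⟩
  simp only [coe_map, coe_univ, Set.image_univ]
  rintro _ ⟨i, rfl⟩ _ ⟨i', rfl⟩ hne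
  exact hg i i' fun h => hne (h ▸ rfl)

theorem exists_section_mem_of_isNClique (hG : ∀ p q, G.Adj p q → p.1 ≠ q.1)
    {s : Finset (ι × κ)} (hs : G.IsNClique (Fintype.card ι) s) :
    ∃ g : ι → κ, ∀ i, (i, g i) ∈ s := by
  have hinj : Set.InjOn Prod.fst (s : Set (ι × κ)) := fun p hp q hq h =>
    by_contra fun hne => hG p q (hs.isClique hp hq hne) h
  have hsurj := surjOn_of_injOn_of_card_le Prod.fst (fun _ _ => mem_coe.mpr (mem_univ _)) hinj
    (by rw [hs.card_eq, card_univ])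
  have hfiber (i : ι) : ∃ j, (i, j) ∈ s := by
    obtain ⟨p, hp, rfl⟩ := hsurj (mem_coe.mpr (mem_univ i))
    exact ⟨p.2, hp⟩
  exact ⟨fun i => (hfiber i).choose, fun i => (hfiber i).choose_spec⟩

theorem exists_isNClique_card_iff (hG : ∀ p q, G.Adj p q → p.1 ≠ q.1) :
    (∃ g : ι → κ, ∀ i i', i ≠ i' → G.Adj (i, g i) (i', g i')) ↔
      ∃ s : Finset (ι × κ), G.IsNClique (Fintype.card ι) s := by
  refine ⟨fun ⟨g, hg⟩ => ⟨_, G.isNClique_map_section hg⟩, fun ⟨s, hs⟩ => ?_⟩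
  obtain ⟨g, hg⟩ := G.exists_section_mem_of_isNClique hG hs
  exact ⟨g, fun i i' h => hs.isClique (hg i) (hg i') fun he => h (Prod.ext_iff.mp he).1⟩

end SimpleGraph

/-- Reduction to maximum clique (Theorem 8).  A ΠΣ3Π polynomial
with multilinear terms `T` has a multilinear monomial (a choice of one term per
clause with pairwise disjoint chosen terms) iff the graph `termCliqueGraph T`
contains a clique of size `m`. -/
theorem piSigma3Pi_multilinear_iff_clique {V : Type*} [DecidableEq V] {m : ℕ}
    (T : Fin m → Fin 3 → Finset V) :
    (∃ g : Fin m → Fin 3, ∀ i i' : Fin m, i ≠ i' →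
      Disjoint (T i (g i)) (T i' (g i'))) ↔
    (∃ s : Finset (Fin m × Fin 3), (termCliqueGraph T).IsNClique m s) := by
  have key := (termCliqueGraph T).exists_isNClique_card_iff fun _ _ h => h.1
  rw [Fintype.card_fin] at key
  rw [← key]
  exact exists_congr fun g => forall₂_congr fun i i' =>
    imp_congr_right fun hne => (and_iff_right hne).symm
end

section
/- Let G be a simple graph on Fin n, let c ≥ 1 be an integer, and define polynomials in MvPolynomial (Fin n) ℕ by p₁ᵢ = (X i)^c and p_{k+1,i} = (X i)^c · ∑_{j ∈ G.neighborFinset i} p_{k,j}, and set p(G,k) = ∑_{i} p_{k,i}. Then for every k ≥ 1 and every finite set S ⊆ Fin n with |S| = k, the coefficient in p(G,k) of the monomial whose exponent is c on each variable of S and 0 elsewhere is nonzero if and only if G contains a path on exactly the vertices of S, i.e., there exist vertices a, b and a walk W : G.Walk a b with W.length = k − 1 that is a path (no repeated vertices) and whose vertex support is exactly S. -/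
/-!
Unfolding the recursion, `p_{k,i}` is the sum over all walks `i = v₁, v₂, …, v_k` of
`x_{v₁}^c ⋯ x_{v_k}^c`. With coefficients in `ℕ` nothing cancels, so the monomial
`∏_{v ∈ S} x_v^c` occurs iff some walk contributes exactly it; since `c ≥ 1` and `|S| = k`,
such a walk visits every vertex of `S` exactly once, i.e. it is a path on `S`. Inductively:
the factor `x_i^c` in front of `p_{k+1,i}` can only be matched if `i ∈ S`, and then the rest
of the monomial is the one of `S \ {i}`, to be produced by `p_{k,j}` for a neighbour `j` of `i`.
-/

/-- The path-detecting polynomials of Section 1: `p₁ᵢ = xᵢ^c` and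
`p_{k+1,i} = xᵢ^c · ∑_{j ∈ N(i)} p_{k,j}` (the value at `k = 0` is irrelevant
and set to `1`). -/
noncomputable def pathPoly {n : ℕ} (G : SimpleGraph (Fin n)) [DecidableRel G.Adj]
    (c : ℕ) : ℕ → Fin n → MvPolynomial (Fin n) ℕ
  | 0, _ => 1
  | 1, i => MvPolynomial.X i ^ c
  | (k + 2), i => MvPolynomial.X i ^ c *
      ∑ j ∈ G.neighborFinset i, pathPoly G c (k + 1) j

open MvPolynomial Finsupp

namespace SimpleGraph

variable {V : Type*} [DecidableEq V] (G : SimpleGraph V)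

def HasPathOn (u : V) (S : Finset V) : Prop :=
  ∃ (v : V) (p : G.Walk u v), p.IsPath ∧ p.support.toFinset = S

variable {G}

theorem Walk.IsPath.length_add_one_eq_card {u v : V} {p : G.Walk u v} (hp : p.IsPath) :
    p.length + 1 = p.support.toFinset.card := by
  rw [List.toFinset_card_of_nodup hp.support_nodup, Walk.length_support]

theorem hasPathOn_singleton_iff {u v : V} : G.HasPathOn u {v} ↔ u = v := by
  constructor
  · rintro ⟨w, p, -, hp⟩
    have hu := p.start_mem_support
    rwa [← List.mem_toFinset, hp, Finset.mem_singleton] at hu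
  · rintro rfl
    exact ⟨u, Walk.nil, Walk.IsPath.nil, rfl⟩

theorem hasPathOn_iff_of_two_le_card {u : V} {S : Finset V} (hS : 2 ≤ S.card) :
    G.HasPathOn u S ↔ u ∈ S ∧ ∃ w, G.Adj u w ∧ G.HasPathOn w (S.erase u) := by
  constructor
  · rintro ⟨v, p, hp, rfl⟩
    cases p with
    | nil => simp at hS
    | cons h q =>
      rw [Walk.cons_isPath_iff] at hp
      refine ⟨by simp, _, h, v, q, hp.1, ?_⟩
      rw [Walk.support_cons, List.toFinset_cons, Finset.erase_insert (by simpa using hp.2)]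
  · rintro ⟨hu, w, h, v, q, hq, hqS⟩
    have hu_q : u ∉ q.support := by simp [← List.mem_toFinset, hqS]
    refine ⟨v, Walk.cons h q, hq.cons hu_q, ?_⟩
    rw [Walk.support_cons, List.toFinset_cons, hqS, Finset.insert_erase hu]

end SimpleGraph

namespace MvPolynomial

variable {σ R : Type*} [CommSemiring R]

theorem coeff_sum_single_X_pow_mul_of_mem [DecidableEq σ] {S : Finset σ} {i : σ} (hi : i ∈ S)
    (c : ℕ) (p : MvPolynomial σ R) :
    coeff (∑ v ∈ S, single v c) (X i ^ c * p) = coeff (∑ v ∈ S.erase i, single v c) p := by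
  rw [← Finset.add_sum_erase S _ hi, X_pow_eq_monomial, coeff_monomial_mul, one_mul]

theorem coeff_sum_single_X_pow_mul_of_notMem {S : Finset σ} {i : σ} (hi : i ∉ S) {c : ℕ}
    (hc : c ≠ 0) (p : MvPolynomial σ R) :
    coeff (∑ v ∈ S, single v c) (X i ^ c * p) = 0 := by
  have hS_i : (∑ v ∈ S, single v c) i = 0 := by
    rw [Finsupp.finsetSum_apply]
    exact Finset.sum_eq_zero fun v hv => single_eq_of_ne (ne_of_mem_of_not_mem hv hi).symm
  rw [X_pow_eq_monomial, coeff_monomial_mul', if_neg]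
  intro hle
  simpa [hS_i, hc] using hle i

end MvPolynomial

section PathPolynomial

variable {n : ℕ} (G : SimpleGraph (Fin n)) [DecidableRel G.Adj] {c : ℕ}

theorem pathPoly_succ {k : ℕ} (hk : 1 ≤ k) (i : Fin n) :
    pathPoly G c (k + 1) i = X i ^ c * ∑ j ∈ G.neighborFinset i, pathPoly G c k j := by
  obtain ⟨m, rfl⟩ := Nat.exists_eq_add_of_le' hk
  rfl

theorem coeff_pathPoly_ne_zero_iff_hasPathOn (hc : c ≠ 0) {k : ℕ} (hk : 1 ≤ k) (i : Fin n)
    {S : Finset (Fin n)} (hS : S.card = k) :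
    coeff (∑ v ∈ S, single v c) (pathPoly G c k i) ≠ 0 ↔ G.HasPathOn i S := by
  induction k, hk using Nat.le_induction generalizing i S with
  | base =>
    obtain ⟨v, rfl⟩ := Finset.card_eq_one.mp hS
    simp [pathPoly, coeff_single_X_pow, SimpleGraph.hasPathOn_singleton_iff, hc]
  | succ k hk ih =>
    rw [pathPoly_succ G hk, SimpleGraph.hasPathOn_iff_of_two_le_card (by omega)]
    by_cases hi : i ∈ S
    · have hcard : (S.erase i).card = k := by rw [Finset.card_erase_of_mem hi, hS]; rfl
      rw [coeff_sum_single_X_pow_mul_of_mem hi, coeff_sum, Ne, Finset.sum_eq_zero_iff]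
      simp [hi, ← ih _ hcard]
    · simp [coeff_sum_single_X_pow_mul_of_notMem hi hc, hi]

end PathPolynomial

/-- For `k ≥ 1` and a `k`-element vertex set `S`, the coefficient
in `p(G,k) = ∑ᵢ p_{k,i}` of the monomial with exponent `c` on each variable of
`S` (and `0` elsewhere) is nonzero iff `G` contains a path on exactly the
vertices of `S`. -/
theorem coeff_pathPoly_ne_zero_iff_path {n : ℕ} (G : SimpleGraph (Fin n))
    [DecidableRel G.Adj] (c k : ℕ) (hc : 1 ≤ c) (hk : 1 ≤ k)
    (S : Finset (Fin n)) (hS : S.card = k) :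
    MvPolynomial.coeff (∑ v ∈ S, Finsupp.single v c)
        (∑ i, pathPoly G c k i) ≠ 0 ↔
    ∃ (a b : Fin n) (W : G.Walk a b), W.IsPath ∧ W.length = k - 1 ∧
      W.support.toFinset = S := by
  rw [coeff_sum, Ne, Finset.sum_eq_zero_iff]
  simp only [Finset.mem_univ, true_imp_iff, not_forall, SimpleGraph.HasPathOn,
    coeff_pathPoly_ne_zero_iff_hasPathOn G (Nat.one_le_iff_ne_zero.mp hc) hk _ hS]
  refine exists_congr fun a => exists_congr fun b => exists_congr fun W => ?_
  constructor
  · rintro ⟨hW, hWS⟩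
    have hlen := hW.length_add_one_eq_card
    rw [hWS] at hlen
    exact ⟨hW, by omega, hWS⟩
  · rintro ⟨hW, -, hWS⟩
    exact ⟨hW, hWS⟩
end

section
/- Let G be a simple graph on Fin n with n ≥ 1, let c ≥ 1 be an integer, and define polynomials in MvPolynomial (Fin n) ℕ by p₁ᵢ = (X i)^c and p_{k+1,i} = (X i)^c · ∑_{j ∈ G.neighborFinset i} p_{k,j}, and set p(G,n) = ∑_{i} p_{n,i}. Then the coefficient in p(G,n) of the monomial x₁^c ⋯ x_n^c (exponent c on every variable) is nonzero if and only if G has a Hamiltonian path, i.e., a path visiting every vertex of Fin n exactly once. -/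
namespace SimpleGraph

variable {V : Type*} [Fintype V] [DecidableEq V] (G : SimpleGraph V)

theorem Walk.smul_toFinsupp_support_eq_iff_isHamiltonian {c : ℕ} (hc : c ≠ 0) {a b : V}
    (W : G.Walk a b) :
    c • Multiset.toFinsupp (W.support : Multiset V) = ∑ v, Finsupp.single v c ↔
      W.IsHamiltonian := by
  simp [Finsupp.ext_iff, Finset.sum_apply', Finsupp.single_apply, hc, Walk.IsHamiltonian]

variable [DecidableRel G.Adj]

theorem sum_finsetWalkLength_zero {M : Type*} [AddCommMonoid M] (u : V)
    (f : ∀ v, G.Walk u v → M) :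
    ∑ v, ∑ W ∈ G.finsetWalkLength 0 u v, f v W = f u .nil := by
  rw [Finset.sum_eq_single u]
  · simp [finsetWalkLength]
  · intro v _ hvu
    simp [finsetWalkLength, Ne.symm hvu]
  · simp

theorem sum_finsetWalkLength_succ {M : Type*} [AddCommMonoid M] (k : ℕ) (u v : V)
    (f : G.Walk u v → M) :
    ∑ W ∈ G.finsetWalkLength (k + 1) u v, f W =
      ∑ w : G.neighborSet u, ∑ W ∈ G.finsetWalkLength k w v, f (W.cons w.2) := by
  rw [finsetWalkLength, Finset.sum_biUnion]
  · simp only [Finset.sum_map]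
    rfl
  · rintro ⟨w, hw⟩ - ⟨w', hw'⟩ - hne
    simp only [Function.onFun, Finset.disjoint_left, Finset.mem_map]
    rintro _ ⟨W, -, rfl⟩ ⟨W', -, h⟩
    exact hne (Subtype.ext (Walk.cons.inj h).1.symm)

end SimpleGraph

open MvPolynomial SimpleGraph

theorem pathPoly_succ_eq_sum_walks {n : ℕ} (G : SimpleGraph (Fin n)) [DecidableRel G.Adj]
    (c k : ℕ) (i : Fin n) :
    pathPoly G c (k + 1) i =
      ∑ v, ∑ W ∈ G.finsetWalkLength k i v,
        monomial (c • Multiset.toFinsupp (W.support : Multiset (Fin n))) 1 := by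
  induction k generalizing i with
  | zero => simp [sum_finsetWalkLength_zero, pathPoly, X_pow_eq_monomial]
  | succ k ih =>
    have hcons : ∀ {w v : Fin n} (h : G.Adj i w) (W : G.Walk w v),
        X i ^ c * monomial (c • Multiset.toFinsupp (W.support : Multiset (Fin n))) 1 =
          monomial (c • Multiset.toFinsupp ((W.cons h).support : Multiset (Fin n))) 1 := by
      intro w v h W
      rw [X_pow_eq_monomial, monomial_mul, one_mul, Walk.support_cons, ← Multiset.cons_coe,
        ← Multiset.singleton_add, map_add, smul_add, Multiset.toFinsupp_singleton,
        Finsupp.smul_single_one]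
    calc pathPoly G c (k + 2) i
        = ∑ w : G.neighborSet i, X i ^ c * pathPoly G c (k + 1) w := by
          rw [pathPoly, Finset.mul_sum]
          exact (Finset.sum_set_coe _).symm
      _ = ∑ w : G.neighborSet i, ∑ v, ∑ W ∈ G.finsetWalkLength k w v,
            monomial (c • Multiset.toFinsupp ((W.cons w.2).support : Multiset (Fin n))) 1 := by
          refine Finset.sum_congr rfl fun w _ => ?_
          simp only [ih, Finset.mul_sum, hcons w.2]
      _ = _ := by
          rw [Finset.sum_comm]
          simp only [sum_finsetWalkLength_succ]

theorem coeff_pathPoly_ne_zero_iff_hamiltonianPath_general {n : ℕ}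
    (G : SimpleGraph (Fin n)) [DecidableRel G.Adj] (c : ℕ) (hc : 1 ≤ c) :
    MvPolynomial.coeff (∑ v : Fin n, Finsupp.single v c)
        (∑ i, pathPoly G c n i) ≠ 0 ↔
    ∃ (a b : Fin n) (W : G.Walk a b), W.IsHamiltonian := by
  rcases n with _ | k
  · simp
  simp only [pathPoly_succ_eq_sum_walks, coeff_sum, coeff_monomial, Ne, Finset.sum_eq_zero_iff,
    Finset.mem_univ, forall_const, ite_eq_right_iff, one_ne_zero, imp_false, not_forall, not_not,
    exists_prop, mem_finsetWalkLength_iff,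
    Walk.smul_toFinsupp_support_eq_iff_isHamiltonian G (Nat.one_le_iff_ne_zero.mp hc)]
  refine exists₂_congr fun a b => ⟨fun ⟨W, _, hW⟩ => ⟨W, hW⟩, fun ⟨W, hW⟩ => ⟨W, ?_, hW⟩⟩
  simpa using hW.length_eq

/-- For `n ≥ 1`, the coefficient in `p(G,n) = ∑ᵢ p_{n,i}` of the
monomial `x₁^c ⋯ x_n^c` (exponent `c` on every variable) is nonzero iff `G` has
a Hamiltonian path (a walk visiting every vertex exactly once). -/
theorem coeff_pathPoly_ne_zero_iff_hamiltonianPath {n : ℕ} (hn : 1 ≤ n)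
    (G : SimpleGraph (Fin n)) [DecidableRel G.Adj] (c : ℕ) (hc : 1 ≤ c) :
    MvPolynomial.coeff (∑ v : Fin n, Finsupp.single v c)
        (∑ i, pathPoly G c n i) ≠ 0 ↔
    ∃ (a b : Fin n) (W : G.Walk a b), W.IsHamiltonian :=
  coeff_pathPoly_ne_zero_iff_hamiltonianPath_general G c hc
end
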